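/- Let M be a graded R-module. The collection β = { GX_r^{qp.M} : r ∈ h(R) } of basic open sets forms a base for the quasi-Zariski topology on qp.Spec_g(M). -/

import Mathlib

section ModuleDefs

variable {G R M : Type*} [AddGroup G] [DecidableEq G] [CommRing R]
  [AddCommGroup M] [Module R M]
  (𝒜 : G → AddSubgroup R) [GradedRing 𝒜]
  (ℳ : G → AddSubgroup M) [DirectSum.Decomposition ℳ] [SetLike.GradedSMul 𝒜 ℳ]

def gradedRadical (I : Ideal R) : Set R :=
  {r : R | ∀ g : G, ∃ n : ℕ, 0 < n ∧ (DirectSum.decompose 𝒜 r g : R) ^ n ∈ I}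

/-- A graded submodule: contains the homogeneous components of all its elements. -/
def IsGradedSubmodule (N : Submodule R M) : Prop :=
  ∀ (g : G) ⦃m : M⦄, m ∈ N → (DirectSum.decompose ℳ m g : M) ∈ N

def IsGradedPrimeIdeal (P : Ideal R) : Prop :=
  P ≠ ⊤ ∧ (∀ (g : G) ⦃r : R⦄, r ∈ P → (DirectSum.decompose 𝒜 r g : R) ∈ P) ∧
    ∀ ⦃r s : R⦄, SetLike.IsHomogeneousElem 𝒜 r → SetLike.IsHomogeneousElem 𝒜 s →
      r * s ∈ P → r ∈ P ∨ s ∈ P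

/-- A graded prime submodule `P`: proper graded, and `r • m ∈ P` for homogeneous `r, m`
implies `m ∈ P` or `r ∈ (P :_R M)`. -/
def IsGradedPrimeSubmodule (P : Submodule R M) : Prop :=
  P ≠ ⊤ ∧ IsGradedSubmodule ℳ P ∧
    ∀ ⦃r : R⦄ ⦃m : M⦄, SetLike.IsHomogeneousElem 𝒜 r → SetLike.IsHomogeneousElem ℳ m →
      r • m ∈ P → m ∈ P ∨ r ∈ P.colon ⊤

/-- The graded radical `Gr_M(Q)` of a submodule: the intersection of all graded prime
submodules containing `Q` (equal to `M` if there are none). -/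
def gradedRadicalSubmodule (Q : Submodule R M) : Submodule R M :=
  sInf {P : Submodule R M | IsGradedPrimeSubmodule 𝒜 ℳ P ∧ Q ≤ P}

/-- A graded quasi-primary submodule `Q`: proper graded, and `r • m ∈ Q` for homogeneous
`r, m` implies `r ∈ Gr((Q :_R M))` or `m ∈ Gr_M(Q)`. -/
def IsGradedQuasiPrimarySubmodule (Q : Submodule R M) : Prop :=
  Q ≠ ⊤ ∧ IsGradedSubmodule ℳ Q ∧
    ∀ ⦃r : R⦄ ⦃m : M⦄, SetLike.IsHomogeneousElem 𝒜 r → SetLike.IsHomogeneousElem ℳ m →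
      r • m ∈ Q → r ∈ gradedRadical 𝒜 (Q.colon ⊤) ∨ m ∈ gradedRadicalSubmodule 𝒜 ℳ Q

/-- `K` satisfies the graded primeful property if every graded prime ideal containing
`(K :_R M)` is of the form `(P :_R M)` for a graded prime submodule `P ⊇ K`. -/
def SatisfiesGradedPrimeful (K : Submodule R M) : Prop :=
  ∀ p : Ideal R, IsGradedPrimeIdeal 𝒜 p → K.colon ⊤ ≤ p →
    ∃ P : Submodule R M, IsGradedPrimeSubmodule 𝒜 ℳ P ∧ K ≤ P ∧ P.colon ⊤ = p

/-- The graded quasi-primary spectrum of `M`: the graded quasi-primary submodules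
satisfying the graded primeful property. -/
def qpSpec : Set (Submodule R M) :=
  {Q : Submodule R M | IsGradedQuasiPrimarySubmodule 𝒜 ℳ Q ∧ SatisfiesGradedPrimeful 𝒜 ℳ Q}

/-- The variety `qp-V^g_M(K) = { Q ∈ qp.Spec_g(M) : Gr((Q:_R M)) ⊇ Gr((K:_R M)) }`. -/
def qpV (K : Submodule R M) : Set (qpSpec 𝒜 ℳ) :=
  {Q : qpSpec 𝒜 ℳ | gradedRadical 𝒜 (K.colon ⊤) ⊆ gradedRadical 𝒜 (Q.1.colon ⊤)}

/-- The quasi-Zariski topology on `qp.Spec_g(M)`, generated by the complements of the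
varieties of graded submodules. -/
def qpZariski : TopologicalSpace (qpSpec 𝒜 ℳ) :=
  TopologicalSpace.generateFrom
    {U : Set (qpSpec 𝒜 ℳ) | ∃ K : Submodule R M, IsGradedSubmodule ℳ K ∧ U = (qpV 𝒜 ℳ K)ᶜ}

end ModuleDefs

/-!
For homogeneous `r`, a point `Q` lies in `GX_r` iff `r ∉ √(Q :_R M)` (using
`(r^t M :_R M) ⊇ (rM :_R M)^t`), and `Gr(I)` is cut out by the radicals of the homogeneous
components, so a subbasic open set `(qp-V K)ᶜ` is the union of the `GX_s` over homogeneous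
`s ∈ √(K :_R M)`. Hence the `GX_r` generate the quasi-Zariski topology, and they form a base
because `GX_1` is everything and `GX_a ∩ GX_b = GX_{ab}`. The last identity says that
`√(Q :_R M)` is prime on homogeneous elements: if `(ab)^n M ⊆ Q` and `a ∉ √(Q :_R M)`,
quasi-primarity puts `b^n M` into `Gr_M(Q)`; if `b ∉ √(Q :_R M)`, the homogeneous core of a
prime ideal over `(Q :_R M)` avoiding `b` is a graded prime ideal, which by the primeful property
is `(P :_R M)` for a graded prime submodule `P ⊇ Gr_M(Q)`, so it contains `b^n`.
-/

open DirectSum SetLike Pointwise Topology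

section Radical

variable {R M : Type*} [CommRing R] [AddCommGroup M] [Module R M]

theorem exists_pos_pow_mem_iff_mem_radical {I : Ideal R} {x : R} :
    (∃ n, 0 < n ∧ x ^ n ∈ I) ↔ x ∈ I.radical := by
  refine ⟨fun ⟨n, _, hn⟩ => ⟨n, hn⟩, fun ⟨n, hn⟩ => ⟨n + 1, n.succ_pos, ?_⟩⟩
  rw [pow_succ']
  exact I.mul_mem_left x hn

theorem mem_colon_top_iff_smul_top_le {N : Submodule R M} {r : R} :
    r ∈ N.colon ⊤ ↔ r • (⊤ : Submodule R M) ≤ N := by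
  rw [← Submodule.mem_colon_iff_le, Submodule.top_coe, Set.top_eq_univ]

theorem pow_smul_top_le_pow_smul_top {c r : R} (h : c • (⊤ : Submodule R M) ≤ r • ⊤) (t : ℕ) :
    c ^ t • (⊤ : Submodule R M) ≤ r ^ t • ⊤ := by
  induction t with
  | zero => simp
  | succ t ih =>
    calc c ^ (t + 1) • (⊤ : Submodule R M) = c ^ t • c • ⊤ := by rw [pow_succ, mul_smul]
      _ ≤ c ^ t • r • ⊤ := by gcongr
      _ = r • c ^ t • ⊤ := smul_comm _ _ _
      _ ≤ r • r ^ t • ⊤ := by gcongr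
      _ = r ^ (t + 1) • ⊤ := by rw [pow_succ', mul_smul]

theorem radical_colon_span_singleton_smul_top_le_iff {N : Submodule R M} {r : R} :
    ((Ideal.span {r} • (⊤ : Submodule R M)).colon ⊤).radical ≤ (N.colon ⊤).radical ↔
      r ∈ (N.colon ⊤).radical := by
  simp only [Submodule.ideal_span_singleton_smul]
  constructor
  · refine fun h => h (Ideal.le_radical (Submodule.mem_colon.2 fun m _ => ?_))
    exact Submodule.smul_mem_pointwise_smul _ _ _ trivial
  · rintro ⟨t, hrt⟩ c ⟨n, hcn⟩
    refine ⟨n * t, mem_colon_top_iff_smul_top_le.2 ?_⟩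
    rw [pow_mul]
    exact (pow_smul_top_le_pow_smul_top (mem_colon_top_iff_smul_top_le.1 hcn) t).trans
      (mem_colon_top_iff_smul_top_le.1 hrt)

end Radical

section Decomposition

variable {ι R M : Type*} [DecidableEq ι] [CommRing R] [AddCommGroup M] [Module R M]
  (𝒜 : ι → AddSubgroup R) (ℳ : ι → AddSubgroup M) [Decomposition ℳ]

theorem mem_colon_top_of_forall_isHomogeneousElem {N : Submodule R M} {r : R}
    (h : ∀ m, IsHomogeneousElem ℳ m → r • m ∈ N) : r ∈ N.colon ⊤ := by
  refine Submodule.mem_colon.2 fun m _ => ?_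
  induction m using DirectSum.Decomposition.inductionOn ℳ with
  | zero => simp
  | homogeneous m => exact h m (isHomogeneousElem_coe m)
  | add m n hm hn => simpa [smul_add] using N.add_mem (hm trivial) (hn trivial)

variable [AddGroup ι] [GradedSMul 𝒜 ℳ]

theorem coe_decompose_smul_of_mem_left {r : R} {d : ι} (hr : r ∈ 𝒜 d) (m : M) (g : ι) :
    (decompose ℳ (r • m) (d + g) : M) = r • (decompose ℳ m g : M) := by
  induction m using DirectSum.Decomposition.inductionOn ℳ generalizing g with
  | zero => simp
  | @homogeneous j m =>
    have hrm : r • (m : M) ∈ ℳ (d + j) := GradedSMul.smul_mem hr m.2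
    by_cases hg : g = j
    · subst hg
      rw [decompose_of_mem_same ℳ hrm, decompose_of_mem_same ℳ m.2]
    · rw [decompose_of_mem_ne ℳ hrm (fun he => hg (add_left_cancel he).symm),
        decompose_of_mem_ne ℳ m.2 (Ne.symm hg), smul_zero]
  | add m n hm hn => simp [smul_add, hm, hn]

theorem isGradedSubmodule_span_singleton_smul_top {r : R} (hr : IsHomogeneousElem 𝒜 r) :
    IsGradedSubmodule ℳ (Ideal.span {r} • (⊤ : Submodule R M)) := by
  obtain ⟨d, hd⟩ := hr
  intro g x hx
  rw [Submodule.ideal_span_singleton_smul] at hx ⊢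
  obtain ⟨m, -, rfl⟩ := (Submodule.mem_smul_pointwise_iff_exists _ _ _).1 hx
  rw [← add_neg_cancel_left d g, coe_decompose_smul_of_mem_left 𝒜 ℳ hd]
  exact Submodule.smul_mem_pointwise_smul _ _ _ trivial

variable [GradedRing 𝒜]

theorem coe_decompose_smul_of_mem_right {m : M} {h : ι} (hm : m ∈ ℳ h) (a : R) (g : ι) :
    (decompose ℳ (a • m) (g + h) : M) = (decompose 𝒜 a g : R) • m := by
  induction a using DirectSum.Decomposition.inductionOn 𝒜 generalizing g with
  | zero => simp
  | @homogeneous i a =>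
    have ham : (a : R) • m ∈ ℳ (i + h) := GradedSMul.smul_mem a.2 hm
    by_cases hg : g = i
    · subst hg
      rw [decompose_of_mem_same ℳ ham, decompose_of_mem_same 𝒜 a.2]
    · rw [decompose_of_mem_ne ℳ ham (fun he => hg (add_right_cancel he).symm),
        decompose_of_mem_ne 𝒜 a.2 (Ne.symm hg), zero_smul]
  | add a b ha hb => simp [add_smul, ha, hb]

theorem isHomogeneous_colon_top {Q : Submodule R M} (hQ : IsGradedSubmodule ℳ Q) :
    (Q.colon ⊤).IsHomogeneous 𝒜 := by
  intro g a ha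
  refine mem_colon_top_of_forall_isHomogeneousElem ℳ fun m ⟨h, hm⟩ => ?_
  rw [← coe_decompose_smul_of_mem_right 𝒜 ℳ hm]
  exact hQ _ (Submodule.mem_colon.1 ha m trivial)

end Decomposition

section ModuleDefs

variable {G R M : Type*} [AddGroup G] [DecidableEq G] [CommRing R]
  [AddCommGroup M] [Module R M]
  (𝒜 : G → AddSubgroup R) [GradedRing 𝒜]
  (ℳ : G → AddSubgroup M) [DirectSum.Decomposition ℳ]

theorem mem_gradedRadical_iff {I : Ideal R} {r : R} :
    r ∈ gradedRadical 𝒜 I ↔ ∀ g, (decompose 𝒜 r g : R) ∈ I.radical :=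
  forall_congr' fun _ => exists_pos_pow_mem_iff_mem_radical

theorem mem_gradedRadical_iff_of_mem {I : Ideal R} {r : R} {i : G} (hr : r ∈ 𝒜 i) :
    r ∈ gradedRadical 𝒜 I ↔ r ∈ I.radical := by
  rw [mem_gradedRadical_iff]
  refine ⟨fun h => by simpa [decompose_of_mem_same 𝒜 hr] using h i, fun h g => ?_⟩
  by_cases hg : g = i
  · rwa [hg, decompose_of_mem_same 𝒜 hr]
  · rw [decompose_of_mem_ne 𝒜 hr (Ne.symm hg)]
    exact zero_mem _

theorem gradedRadical_subset_iff {I J : Ideal R} :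
    gradedRadical 𝒜 I ⊆ gradedRadical 𝒜 J ↔
      ∀ i, ∀ r ∈ 𝒜 i, r ∈ I.radical → r ∈ J.radical := by
  refine ⟨fun h i r hr hrI => ?_, fun h r hr => ?_⟩
  · exact (mem_gradedRadical_iff_of_mem 𝒜 hr).1 (h ((mem_gradedRadical_iff_of_mem 𝒜 hr).2 hrI))
  · rw [mem_gradedRadical_iff] at hr ⊢
    exact fun g => h g _ (decompose 𝒜 r g).2 (hr g)

theorem isGradedPrimeIdeal_homogeneousCore {p : Ideal R} (hp : p.IsPrime) :
    IsGradedPrimeIdeal 𝒜 (p.homogeneousCore 𝒜).toIdeal := by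
  refine ⟨fun h => hp.ne_top (top_le_iff.1 (h ▸ Ideal.toIdeal_homogeneousCore_le 𝒜 p)),
    (p.homogeneousCore 𝒜).isHomogeneous, fun r s hr hs hrs => ?_⟩
  exact (hp.mem_or_mem (Ideal.toIdeal_homogeneousCore_le 𝒜 p hrs)).imp
    (Ideal.mem_homogeneousCore_of_homogeneous_of_mem hr)
    (Ideal.mem_homogeneousCore_of_homogeneous_of_mem hs)

theorem exists_isGradedPrimeIdeal_le_notMem {I : Ideal R} (hI : I.IsHomogeneous 𝒜) {b : R}
    (hb : b ∉ I.radical) : ∃ p, IsGradedPrimeIdeal 𝒜 p ∧ I ≤ p ∧ b ∉ p := by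
  simp only [Ideal.radical_eq_sInf, Submodule.mem_sInf, not_forall] at hb
  obtain ⟨p, ⟨hIp, hp⟩, hbp⟩ := hb
  refine ⟨_, isGradedPrimeIdeal_homogeneousCore 𝒜 hp, ?_,
    fun h => hbp (Ideal.toIdeal_homogeneousCore_le 𝒜 p h)⟩
  rw [← hI.toIdeal_homogeneousCore_eq_self]
  exact Ideal.homogeneousCore_mono 𝒜 hIp

/-- The paper's `GX_r^{qp.M}`. -/
def qpBasicOpen (r : R) : Set (qpSpec 𝒜 ℳ) :=
  (qpV 𝒜 ℳ (Ideal.span {r} • (⊤ : Submodule R M)))ᶜ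

theorem mem_qpBasicOpen_iff {r : R} (hr : IsHomogeneousElem 𝒜 r) {Q : qpSpec 𝒜 ℳ} :
    Q ∈ qpBasicOpen 𝒜 ℳ r ↔ r ∉ (Q.1.colon ⊤).radical := by
  obtain ⟨i, hr⟩ := hr
  refine not_congr ⟨fun h => ?_, fun h => ?_⟩
  · exact (gradedRadical_subset_iff 𝒜).1 h i r hr
      (radical_colon_span_singleton_smul_top_le_iff.1 le_rfl)
  · exact (gradedRadical_subset_iff 𝒜).2 fun _ _ _ =>
      fun hs => radical_colon_span_singleton_smul_top_le_iff.2 h hs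

theorem qpBasicOpen_one : qpBasicOpen 𝒜 ℳ 1 = Set.univ := by
  refine Set.eq_univ_of_forall fun Q =>
    (mem_qpBasicOpen_iff 𝒜 ℳ (isHomogeneousElem_one 𝒜)).2 fun h => Q.2.1.1 ?_
  have hQ : Q.1.colon ⊤ = ⊤ := Ideal.radical_eq_top.1 ((Ideal.eq_top_iff_one _).2 h)
  exact eq_top_iff.2 fun m _ => (Submodule.colon_eq_top_iff_subset _).1 hQ (Set.mem_univ m)

theorem compl_qpV_eq_sUnion (K : Submodule R M) :
    (qpV 𝒜 ℳ K)ᶜ =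
      ⋃₀ (qpBasicOpen 𝒜 ℳ '' {r | IsHomogeneousElem 𝒜 r ∧ r ∈ (K.colon ⊤).radical}) := by
  ext Q
  simp only [Set.sUnion_image, Set.mem_compl_iff, Set.mem_iUnion, Set.mem_ofPred_eq,
    exists_prop]
  constructor
  · intro hQ
    obtain ⟨i, r, hr, hrK, hrQ⟩ : ∃ i, ∃ r ∈ 𝒜 i, r ∈ (K.colon ⊤).radical ∧
        r ∉ (Q.1.colon ⊤).radical := by
      simpa only [qpV, Set.mem_ofPred_eq, gradedRadical_subset_iff, not_forall, exists_prop]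
        using hQ
    exact ⟨r, ⟨⟨i, hr⟩, hrK⟩, (mem_qpBasicOpen_iff 𝒜 ℳ ⟨i, hr⟩).2 hrQ⟩
  · rintro ⟨r, ⟨⟨i, hr⟩, hrK⟩, hQ⟩ h
    exact (mem_qpBasicOpen_iff 𝒜 ℳ ⟨i, hr⟩).1 hQ ((gradedRadical_subset_iff 𝒜).1 h i r hr hrK)

variable [SetLike.GradedSMul 𝒜 ℳ]

theorem colon_gradedRadicalSubmodule_le_radical {Q : Submodule R M}
    (hQ : IsGradedSubmodule ℳ Q) (hpf : SatisfiesGradedPrimeful 𝒜 ℳ Q) :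
    (gradedRadicalSubmodule 𝒜 ℳ Q).colon ⊤ ≤ (Q.colon ⊤).radical := by
  intro b hb
  by_contra hbQ
  obtain ⟨p, hp, hQp, hbp⟩ :=
    exists_isGradedPrimeIdeal_le_notMem 𝒜 (isHomogeneous_colon_top 𝒜 ℳ hQ) hbQ
  obtain ⟨P, hP, hQP, rfl⟩ := hpf p hp hQp
  have hQP' : gradedRadicalSubmodule 𝒜 ℳ Q ≤ P := sInf_le ⟨hP, hQP⟩
  exact hbp (Submodule.colon_mono hQP' le_rfl hb)

theorem mem_or_mem_radical_colon_of_mul_mem {Q : Submodule R M} (hQ : Q ∈ qpSpec 𝒜 ℳ) {a b : R}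
    (ha : IsHomogeneousElem 𝒜 a) (hb : IsHomogeneousElem 𝒜 b)
    (hab : a * b ∈ (Q.colon ⊤).radical) :
    a ∈ (Q.colon ⊤).radical ∨ b ∈ (Q.colon ⊤).radical := by
  obtain ⟨⟨-, hQgr, hQqp⟩, hpf⟩ := hQ
  obtain ⟨da, ha⟩ := ha
  obtain ⟨db, hb⟩ := hb
  obtain ⟨n, habn⟩ := hab
  refine or_iff_not_imp_left.2 fun haQ => ?_
  have hbn : b ^ n ∈ (gradedRadicalSubmodule 𝒜 ℳ Q).colon ⊤ := by
    refine mem_colon_top_of_forall_isHomogeneousElem ℳ fun m ⟨j, hm⟩ => ?_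
    have h : a ^ n • b ^ n • m ∈ Q := by
      rw [← mul_smul, ← mul_pow]
      exact Submodule.mem_colon.1 habn m trivial
    refine (hQqp ⟨_, pow_mem_graded n ha⟩ ⟨_, GradedSMul.smul_mem (pow_mem_graded n hb) hm⟩
      h).resolve_left fun han => haQ ?_
    exact Ideal.mem_radical_of_pow_mem
      ((mem_gradedRadical_iff_of_mem 𝒜 (pow_mem_graded n ha)).1 han)
  exact Ideal.mem_radical_of_pow_mem (colon_gradedRadicalSubmodule_le_radical 𝒜 ℳ hQgr hpf hbn)

theorem isOpen_qpBasicOpen {r : R} (hr : IsHomogeneousElem 𝒜 r) :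
    IsOpen[qpZariski 𝒜 ℳ] (qpBasicOpen 𝒜 ℳ r) :=
  TopologicalSpace.isOpen_generateFrom_of_mem
    ⟨_, isGradedSubmodule_span_singleton_smul_top 𝒜 ℳ hr, rfl⟩

theorem qpBasicOpen_mul {a b : R} (ha : IsHomogeneousElem 𝒜 a) (hb : IsHomogeneousElem 𝒜 b) :
    qpBasicOpen 𝒜 ℳ (a * b) = qpBasicOpen 𝒜 ℳ a ∩ qpBasicOpen 𝒜 ℳ b := by
  ext Q
  rw [Set.mem_inter_iff, mem_qpBasicOpen_iff 𝒜 ℳ (ha.mul hb), mem_qpBasicOpen_iff 𝒜 ℳ ha,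
    mem_qpBasicOpen_iff 𝒜 ℳ hb, ← not_or]
  refine not_congr ⟨mem_or_mem_radical_colon_of_mul_mem 𝒜 ℳ Q.2 ha hb, ?_⟩
  rintro (h | h)
  exacts [Ideal.mul_mem_right _ _ h, Ideal.mul_mem_left _ _ h]

/-- The basic open sets `GX_r^{qp.M}` for homogeneous `r ∈ h(R)` form a base for the
quasi-Zariski topology on `qp.Spec_g(M)`. -/
theorem isTopologicalBasis_gx :
    @TopologicalSpace.IsTopologicalBasis (qpSpec 𝒜 ℳ) (qpZariski 𝒜 ℳ)
      {U : Set (qpSpec 𝒜 ℳ) | ∃ r : R, SetLike.IsHomogeneousElem 𝒜 r ∧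
        U = (qpV 𝒜 ℳ (Ideal.span {r} • (⊤ : Submodule R M)))ᶜ} := by
  refine @TopologicalSpace.IsTopologicalBasis.mk _ (qpZariski 𝒜 ℳ) _ ?_ ?_ (le_antisymm ?_ ?_)
  · rintro _ ⟨a, ha, rfl⟩ _ ⟨b, hb, rfl⟩ Q hQ
    refine ⟨qpBasicOpen 𝒜 ℳ (a * b), ⟨a * b, ha.mul hb, rfl⟩, ?_⟩
    rw [qpBasicOpen_mul 𝒜 ℳ ha hb]
    exact ⟨hQ, le_rfl⟩
  · exact Set.eq_univ_of_univ_subset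
      (qpBasicOpen_one 𝒜 ℳ ▸ Set.subset_sUnion_of_mem ⟨1, isHomogeneousElem_one 𝒜, rfl⟩)
  · refine TopologicalSpace.le_generateFrom_iff_subset_isOpen.2 ?_
    rintro _ ⟨r, hr, rfl⟩
    exact isOpen_qpBasicOpen 𝒜 ℳ hr
  · refine TopologicalSpace.le_generateFrom_iff_subset_isOpen.2 ?_
    rintro _ ⟨K, -, rfl⟩
    rw [Set.mem_ofPred_eq, compl_qpV_eq_sUnion]
    exact .sUnion _ fun _ ⟨r, ⟨hr, _⟩, hU⟩ => .basic _ ⟨r, hr, hU.symm⟩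

end ModuleDefs
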